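/- In the two-stage model with η(·, θ₀) and η'(·, θ₀) bounded Borel functions on [a,b], the score S_n(θ₀) = (n₁/σ²)(ȳ₁ − η(x₁, θ₀))η'(x₁, θ₀) + (n₂/σ²)(ȳ₂ − η(x₂, θ₀))η'(x₂, θ₀) satisfies E[S_n(θ₀)] = 0 and Var[S_n(θ₀)] = (n₁/σ²) η'(x₁, θ₀)² + (n₂/σ²) E[η'(x₂, θ₀)²]; that is, the variance of the score equals the Fisher information of the two-stage adaptive design, the two stage-wise score increments being uncorrelated. -/

import Mathlib

/-!
Centring each stage, `nₖ (ȳₖ - η(xₖ, θ₀))` is the sum `Eₖ` of the stage-`k` errors, so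
`σ² S = η'(x₁, θ₀) E₁ + η'(x₂, θ₀) E₂`. The dose `x₂` is a function of `E₁` alone, so the bounded
weight `η'(x₂, θ₀)` and `E₁` are jointly independent of the centred `E₂`. Hence `E₂` kills both
`E[η'(x₂, θ₀) E₂]` and the cross term `E[E₁ η'(x₂, θ₀) E₂]`, while
`E[η'(x₂, θ₀)² E₂²] = E[η'(x₂, θ₀)²] · n₂σ²`.
-/

open MeasureTheory ProbabilityTheory Finset
open scoped NNReal ENNReal

lemma Finset.card_mul_inv_card_mul_sum_const_add_sub {ι K : Type*} [Field K] [CharZero K]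
    (s : Finset ι) (c : K) (f : ι → K) :
    (#s : K) * ((#s : K)⁻¹ * ∑ i ∈ s, (c + f i) - c) = ∑ i ∈ s, f i := by
  rcases s.eq_empty_or_nonempty with rfl | hs
  · simp
  have : (#s : K) ≠ 0 := Nat.cast_ne_zero.mpr hs.card_pos.ne'
  rw [sum_add_distrib, sum_const, nsmul_eq_mul]
  field_simp
  ring

namespace ProbabilityTheory

variable {Ω : Type*} {mΩ : MeasurableSpace Ω} {μ : Measure Ω}

lemma HasLaw.memLp {E : Type*} [NormedAddCommGroup E] {mE : MeasurableSpace E}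
    [OpensMeasurableSpace E] [SecondCountableTopology E] {X : Ω → E} {ν : Measure E}
    {p : ℝ≥0∞} (hX : HasLaw X ν μ) (h : MemLp id p ν) : MemLp X p μ := by
  rw [← hX.map_eq] at h
  exact (memLp_map_measure_iff aestronglyMeasurable_id hX.aemeasurable).mp h

lemma iIndepFun.indepFun_finsetSum_finsetSum {ι : Type*} {f : ι → Ω → ℝ} {S T : Finset ι}
    (hST : Disjoint S T) (hf : iIndepFun f μ) (hf_meas : ∀ i, Measurable (f i)) :
    IndepFun (fun ω => ∑ i ∈ S, f i ω) (fun ω => ∑ i ∈ T, f i ω) μ := by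
  simp_rw [← Finset.sum_coe_sort S, ← Finset.sum_coe_sort T]
  exact (hf.indepFun_finset S T hST hf_meas).comp (φ := fun x => ∑ i, x i)
    (ψ := fun x => ∑ i, x i) (by fun_prop) (by fun_prop)

lemma iIndepFun.indepFun_finsetSum_inl_finsetSum_inr {ι κ : Type*} {f : ι ⊕ κ → Ω → ℝ}
    (hf : iIndepFun f μ) (hf_meas : ∀ i, Measurable (f i)) (s : Finset ι) (t : Finset κ) :
    IndepFun (fun ω => ∑ i ∈ s, f (.inl i) ω) (fun ω => ∑ j ∈ t, f (.inr j) ω) μ := by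
  simpa using hf.indepFun_finsetSum_finsetSum (S := s.map .inl) (T := t.map .inr)
    (by simp [disjoint_left]) hf_meas

section WeightedIncrement

variable {X Y G : Ω → ℝ}

lemma integral_const_mul_add_mul_of_indepFun (c : ℝ) (hGY : IndepFun G Y μ)
    (hX : Integrable X μ) (hGYi : Integrable (fun ω => G ω * Y ω) μ)
    (hGm : AEStronglyMeasurable G μ) (hYm : AEStronglyMeasurable Y μ) (hY : μ[Y] = 0) :
    ∫ ω, (c * X ω + G ω * Y ω) ∂μ = c * μ[X] := by
  rw [integral_add (hX.const_mul c) hGYi, integral_const_mul,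
    hGY.integral_fun_mul_eq_mul_integral hGm hYm, hY, mul_zero, add_zero]

variable [IsProbabilityMeasure μ]

lemma covariance_mul_eq_zero_of_indepFun (hXGY : IndepFun (fun ω => (X ω, G ω)) Y μ)
    (hX : MemLp X 2 μ) (hGY : MemLp (fun ω => G ω * Y ω) 2 μ) (hGm : AEStronglyMeasurable G μ)
    (hYm : AEStronglyMeasurable Y μ) (hY : μ[Y] = 0) :
    cov[X, fun ω => G ω * Y ω; μ] = 0 := by
  have hXG_Y : IndepFun (fun ω => X ω * G ω) Y μ :=
    hXGY.comp (φ := fun p : ℝ × ℝ => p.1 * p.2) (ψ := id) (by fun_prop) measurable_id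
  have hG_Y : IndepFun G Y μ := hXGY.comp measurable_snd measurable_id
  rw [covariance_eq_sub hX hGY, hG_Y.integral_fun_mul_eq_mul_integral hGm hYm, hY]
  simp_rw [Pi.mul_apply, ← mul_assoc]
  rw [hXG_Y.integral_fun_mul_eq_mul_integral (hX.1.mul hGm) hYm, hY]
  ring

lemma variance_mul_of_indepFun (hGY : IndepFun G Y μ) (hGYL2 : MemLp (fun ω => G ω * Y ω) 2 μ)
    (hY : MemLp Y 2 μ) (hGm : AEStronglyMeasurable G μ) (hY0 : μ[Y] = 0) :
    Var[fun ω => G ω * Y ω; μ] = (∫ ω, G ω ^ 2 ∂μ) * Var[Y; μ] := by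
  have hsq : IndepFun (fun ω => G ω ^ 2) (fun ω => Y ω ^ 2) μ :=
    hGY.comp (φ := fun x : ℝ => x ^ 2) (ψ := fun x : ℝ => x ^ 2) (by fun_prop) (by fun_prop)
  rw [variance_eq_sub hGYL2, variance_eq_sub hY,
    hGY.integral_fun_mul_eq_mul_integral hGm hY.1, hY0]
  simp_rw [Pi.pow_apply, mul_pow]
  rw [hsq.integral_fun_mul_eq_mul_integral (hGm.pow 2) (hY.1.pow 2)]
  ring

lemma variance_const_mul_add_mul_of_indepFun (c : ℝ)
    (hXGY : IndepFun (fun ω => (X ω, G ω)) Y μ) (hX : MemLp X 2 μ) (hG : MemLp G ∞ μ)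
    (hY : MemLp Y 2 μ) (hY0 : μ[Y] = 0) :
    Var[fun ω => c * X ω + G ω * Y ω; μ]
      = c ^ 2 * Var[X; μ] + (∫ ω, G ω ^ 2 ∂μ) * Var[Y; μ] := by
  have hGY : MemLp (fun ω => G ω * Y ω) 2 μ := hY.mul' hG
  have hG_Y : IndepFun G Y μ := hXGY.comp measurable_snd measurable_id
  rw [variance_fun_add (hX.const_mul c) hGY, variance_const_mul, covariance_const_mul_left,
    covariance_mul_eq_zero_of_indepFun hXGY hX hGY hG.1 hY.1 hY0,
    variance_mul_of_indepFun hG_Y hGY hY hG.1 hY0]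
  simp

end WeightedIncrement

section GaussianNoise

variable {ι : Type*} {ε : ι → Ω → ℝ} {m : ℝ} {v : ℝ≥0}

lemma memLp_finsetSum_of_hasLaw_gaussianReal {p : ℝ≥0∞} (hp : p ≠ ∞)
    (hε : ∀ i, HasLaw (ε i) (gaussianReal m v) μ) (s : Finset ι) :
    MemLp (fun ω => ∑ i ∈ s, ε i ω) p μ :=
  memLp_finsetSum s fun i _ => (hε i).memLp (memLp_id_gaussianReal' p hp)

lemma integral_finsetSum_of_hasLaw_gaussianReal (hε : ∀ i, HasLaw (ε i) (gaussianReal m v) μ)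
    (s : Finset ι) : ∫ ω, ∑ i ∈ s, ε i ω ∂μ = #s * m := by
  rw [integral_finsetSum s fun i _ =>
    memLp_one_iff_integrable.mp ((hε i).memLp (memLp_id_gaussianReal' 1 (by simp)))]
  simp [(hε _).integral_eq]

lemma variance_finsetSum_of_hasLaw_gaussianReal (hε : ∀ i, HasLaw (ε i) (gaussianReal m v) μ)
    (hind : iIndepFun ε μ) (s : Finset ι) : Var[fun ω => ∑ i ∈ s, ε i ω; μ] = #s * v := by
  rw [← Finset.sum_fn, IndepFun.variance_sum
    (fun i _ => (hε i).memLp (memLp_id_gaussianReal' 2 (by simp)))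
    fun i _ j _ hij => hind.indepFun hij]
  simp [(hε _).variance_eq]

lemma memLp_top_comp_finsetSum_of_hasLaw_gaussianReal {g : ℝ → ℝ}
    (hε : ∀ i, HasLaw (ε i) (gaussianReal m v) μ) (hg : Measurable g) {C : ℝ}
    (hC : ∀ y, |g y| ≤ C) (s : Finset ι) :
    MemLp (fun ω => g (∑ i ∈ s, ε i ω)) ∞ μ :=
  memLp_top_of_bound (hg.comp_aemeasurable (memLp_finsetSum_of_hasLaw_gaussianReal
      ENNReal.one_ne_top hε s).1.aemeasurable).aestronglyMeasurable
    C (ae_of_all _ fun _ => hC _)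

end GaussianNoise

section TwoStageNoise

variable [IsProbabilityMeasure μ] {ι κ : Type*} {ε : ι ⊕ κ → Ω → ℝ} {v : ℝ≥0} {s : Finset ι}
  {t : Finset κ} {g : ℝ → ℝ}

lemma integral_const_mul_finsetSum_add_comp_mul_finsetSum
    (hε : ∀ k, HasLaw (ε k) (gaussianReal 0 v) μ) (hind : iIndepFun ε μ)
    (hmeas : ∀ k, Measurable (ε k)) (hg : Measurable g) {C : ℝ} (hC : ∀ y, |g y| ≤ C)
    (c : ℝ) :
    ∫ ω, (c * ∑ i ∈ s, ε (.inl i) ω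
      + g (∑ i ∈ s, ε (.inl i) ω) * ∑ j ∈ t, ε (.inr j) ω) ∂μ = 0 := by
  have hG := memLp_top_comp_finsetSum_of_hasLaw_gaussianReal (fun i => hε (.inl i)) hg hC s
  have hY := memLp_finsetSum_of_hasLaw_gaussianReal (p := 2) (by simp) (fun j => hε (.inr j)) t
  have hGY : IndepFun (fun ω => g (∑ i ∈ s, ε (.inl i) ω)) (fun ω => ∑ j ∈ t, ε (.inr j) ω) μ :=
    (hind.indepFun_finsetSum_inl_finsetSum_inr hmeas s t).comp hg measurable_id
  rw [integral_const_mul_add_mul_of_indepFun c hGY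
      ((memLp_finsetSum_of_hasLaw_gaussianReal (p := 1) (by simp)
        (fun i => hε (.inl i)) s).integrable le_rfl)
      ((hY.mul' hG).integrable one_le_two) hG.1 hY.1
      ((integral_finsetSum_of_hasLaw_gaussianReal (fun j => hε (.inr j)) t).trans (mul_zero _)),
    integral_finsetSum_of_hasLaw_gaussianReal (fun i => hε (.inl i)), mul_zero, mul_zero]

lemma variance_const_mul_finsetSum_add_comp_mul_finsetSum
    (hε : ∀ k, HasLaw (ε k) (gaussianReal 0 v) μ) (hind : iIndepFun ε μ)
    (hmeas : ∀ k, Measurable (ε k)) (hg : Measurable g) {C : ℝ} (hC : ∀ y, |g y| ≤ C)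
    (c : ℝ) :
    Var[fun ω => c * ∑ i ∈ s, ε (.inl i) ω
      + g (∑ i ∈ s, ε (.inl i) ω) * ∑ j ∈ t, ε (.inr j) ω; μ]
      = c ^ 2 * (#s * v) + (∫ ω, g (∑ i ∈ s, ε (.inl i) ω) ^ 2 ∂μ) * (#t * v) := by
  have hXGY : IndepFun (fun ω => (∑ i ∈ s, ε (.inl i) ω, g (∑ i ∈ s, ε (.inl i) ω)))
      (fun ω => ∑ j ∈ t, ε (.inr j) ω) μ :=
    (hind.indepFun_finsetSum_inl_finsetSum_inr hmeas s t).comp (measurable_id.prodMk hg)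
      measurable_id
  rw [variance_const_mul_add_mul_of_indepFun c hXGY
      (memLp_finsetSum_of_hasLaw_gaussianReal (by simp) (fun i => hε (.inl i)) s)
      (memLp_top_comp_finsetSum_of_hasLaw_gaussianReal (fun i => hε (.inl i)) hg hC s)
      (memLp_finsetSum_of_hasLaw_gaussianReal (by simp) (fun j => hε (.inr j)) t)
      ((integral_finsetSum_of_hasLaw_gaussianReal (fun j => hε (.inr j)) t).trans (mul_zero _)),
    variance_finsetSum_of_hasLaw_gaussianReal (fun i => hε (.inl i))
      (hind.precomp Sum.inl_injective),
    variance_finsetSum_of_hasLaw_gaussianReal (fun j => hε (.inr j))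
      (hind.precomp Sum.inr_injective)]

end TwoStageNoise

end ProbabilityTheory

theorem score_mean_zero_and_variance_eq_fisher_information_general
    {Ω : Type*} [mΩ : MeasurableSpace Ω] (μ : Measure Ω) [IsProbabilityMeasure μ]
    (n₁ : ℕ) (a b x₁ θ₀ σ : ℝ) (hσ : 0 < σ)
    (η η' : ℝ → ℝ → ℝ)
    (hη' : Measurable fun x => η' x θ₀) (hη'bdd : ∃ C : ℝ, ∀ x ∈ Set.Icc a b, |η' x θ₀| ≤ C)
    (ε : (Fin n₁ ⊕ ℕ) → Ω → ℝ) (hεmeas : ∀ k, Measurable (ε k))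
    (hεindep : iIndepFun ε μ)
    (hεlaw : ∀ k, μ.map (ε k) = gaussianReal 0 ⟨σ ^ 2, sq_nonneg σ⟩)
    (ξ : ℝ → ℝ) (hξ : Measurable ξ) (hξab : ∀ y, ξ y ∈ Set.Icc a b)
    (ybar₁ : Ω → ℝ)
    (hybar₁ : ybar₁ = fun ω => (n₁ : ℝ)⁻¹ * ∑ i : Fin n₁, (η x₁ θ₀ + ε (Sum.inl i) ω))
    (n₂ : ℕ)
    (ybar₂ : Ω → ℝ)
    (hybar₂ : ybar₂ = fun ω =>
      (n₂ : ℝ)⁻¹ * ∑ j ∈ Finset.range n₂, (η (ξ (ybar₁ ω)) θ₀ + ε (Sum.inr j) ω))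
    -- the score at the true parameter
    (S : Ω → ℝ)
    (hS : S = fun ω =>
      ((n₁ : ℝ) / σ ^ 2) * (ybar₁ ω - η x₁ θ₀) * η' x₁ θ₀
        + ((n₂ : ℝ) / σ ^ 2) * (ybar₂ ω - η (ξ (ybar₁ ω)) θ₀) * η' (ξ (ybar₁ ω)) θ₀) :
    ∫ ω, S ω ∂μ = 0 ∧
      variance S μ =
        ((n₁ : ℝ) / σ ^ 2) * (η' x₁ θ₀) ^ 2
          + ((n₂ : ℝ) / σ ^ 2) * ∫ ω, (η' (ξ (ybar₁ ω)) θ₀) ^ 2 ∂μ := by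
  set v : ℝ≥0 := ⟨σ ^ 2, sq_nonneg σ⟩
  have hv : (v : ℝ) = σ ^ 2 := rfl
  have hlaw k : HasLaw (ε k) (gaussianReal 0 v) μ := ⟨(hεmeas k).aemeasurable, hεlaw k⟩
  set g := fun y => η' (ξ ((n₁ : ℝ)⁻¹ * (n₁ * η x₁ θ₀ + y))) θ₀
  have hg : Measurable g := hη'.comp (hξ.comp (by fun_prop))
  obtain ⟨C, hC⟩ := hη'bdd
  have hgC y : |g y| ≤ C := hC _ (hξab _)
  have hG ω : η' (ξ (ybar₁ ω)) θ₀ = g (∑ i, ε (.inl i) ω) := by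
    simp [g, hybar₁, sum_add_distrib]
  have hS_eq : S = fun ω => (σ ^ 2)⁻¹ * (η' x₁ θ₀ * ∑ i, ε (.inl i) ω
      + g (∑ i, ε (.inl i) ω) * ∑ j ∈ range n₂, ε (.inr j) ω) := by
    ext ω
    have h₁ := card_mul_inv_card_mul_sum_const_add_sub univ (η x₁ θ₀) fun i => ε (.inl i) ω
    have h₂ := card_mul_inv_card_mul_sum_const_add_sub (range n₂) (η (ξ (ybar₁ ω)) θ₀)
      fun j => ε (.inr j) ω
    simp only [card_univ, Fintype.card_fin, card_range, ← congrFun hybar₁ ω,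
      ← congrFun hybar₂ ω] at h₁ h₂
    simp only [hS, hG]
    linear_combination (σ ^ 2)⁻¹ * η' x₁ θ₀ * h₁ + (σ ^ 2)⁻¹ * g (∑ i, ε (.inl i) ω) * h₂
  refine ⟨?_, ?_⟩
  · rw [hS_eq, integral_const_mul, integral_const_mul_finsetSum_add_comp_mul_finsetSum hlaw
      hεindep hεmeas hg hgC, mul_zero]
  · rw [hS_eq, variance_const_mul, variance_const_mul_finsetSum_add_comp_mul_finsetSum hlaw
      hεindep hεmeas hg hgC, card_univ, Fintype.card_fin, card_range, hv]
    simp only [hG]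
    field_simp

/-- The score of the two-stage adaptive design has mean zero, and its variance equals the
Fisher information `(n₁/σ²)·η'(x₁, θ₀)² + (n₂/σ²)·E[η'(x₂, θ₀)²]`, the two stage-wise score
increments being uncorrelated. -/
theorem score_mean_zero_and_variance_eq_fisher_information
    {Ω : Type*} [mΩ : MeasurableSpace Ω] (μ : Measure Ω) [IsProbabilityMeasure μ]
    (n₁ : ℕ) (hn₁ : 1 ≤ n₁) (a b x₁ θ₀ σ : ℝ) (hab : a ≤ b) (hσ : 0 < σ)
    (η η' : ℝ → ℝ → ℝ)
    (hderiv : ∀ x θ, HasDerivAt (fun t => η x t) (η' x θ) θ)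
    (hη : Measurable fun x => η x θ₀) (hηbdd : ∃ C : ℝ, ∀ x ∈ Set.Icc a b, |η x θ₀| ≤ C)
    (hη' : Measurable fun x => η' x θ₀) (hη'bdd : ∃ C : ℝ, ∀ x ∈ Set.Icc a b, |η' x θ₀| ≤ C)
    (ε : (Fin n₁ ⊕ ℕ) → Ω → ℝ) (hεmeas : ∀ k, Measurable (ε k))
    (hεindep : iIndepFun ε μ)
    (hεlaw : ∀ k, μ.map (ε k) = gaussianReal 0 ⟨σ ^ 2, sq_nonneg σ⟩)
    (ξ : ℝ → ℝ) (hξ : Measurable ξ) (hξab : ∀ y, ξ y ∈ Set.Icc a b)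
    (ybar₁ : Ω → ℝ)
    (hybar₁ : ybar₁ = fun ω => (n₁ : ℝ)⁻¹ * ∑ i : Fin n₁, (η x₁ θ₀ + ε (Sum.inl i) ω))
    (n₂ : ℕ) (hn₂ : 1 ≤ n₂)
    (ybar₂ : Ω → ℝ)
    (hybar₂ : ybar₂ = fun ω =>
      (n₂ : ℝ)⁻¹ * ∑ j ∈ Finset.range n₂, (η (ξ (ybar₁ ω)) θ₀ + ε (Sum.inr j) ω))
    -- the score at the true parameter
    (S : Ω → ℝ)
    (hS : S = fun ω =>
      ((n₁ : ℝ) / σ ^ 2) * (ybar₁ ω - η x₁ θ₀) * η' x₁ θ₀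
        + ((n₂ : ℝ) / σ ^ 2) * (ybar₂ ω - η (ξ (ybar₁ ω)) θ₀) * η' (ξ (ybar₁ ω)) θ₀) :
    ∫ ω, S ω ∂μ = 0 ∧
      variance S μ =
        ((n₁ : ℝ) / σ ^ 2) * (η' x₁ θ₀) ^ 2
          + ((n₂ : ℝ) / σ ^ 2) * ∫ ω, (η' (ξ (ybar₁ ω)) θ₀) ^ 2 ∂μ :=
  score_mean_zero_and_variance_eq_fisher_information_general (mΩ := mΩ) μ n₁ a b x₁ θ₀ σ hσ η η' hη'
    hη'bdd ε hεmeas hεindep hεlaw ξ hξ hξab ybar₁ hybar₁ n₂ ybar₂ hybar₂ S hS
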